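/- arXiv:1701.06410 — 3 statements merged into one kernel-verified Lean document; each statement's English description precedes it below -/
import Mathlib

section
/- Suppose each individual's preferences are monotonically increasing over their own commodity allocation. Then no redistribution of a fixed total stock of commodities is a neoclassical Pareto improvement: for any allocation x and any allocation x' with ∑_{n∈N} x'_n = ∑_{n∈N} x_n (componentwise), the movement x → x' is not a neoclassical Pareto improvement. Consequently, every allocation x is neoclassical Pareto efficient within the set of allocations having the same componentwise total as x. -/
/-- With monotonically increasing preferences over own
allocations, no redistribution of a fixed total stock of commodities is a
neoclassical Pareto improvement: for any allocations `x`, `x'` with the same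
componentwise total, the movement `x → x'` is not a neoclassical Pareto
improvement; consequently every allocation `x` is neoclassical Pareto
efficient within the set of (nonnegative) allocations having the same
componentwise total as `x`. -/
theorem no_redistribution_is_pareto_improvement
    {N : Type*} [Fintype N] (m : ℕ)
    (x : N → Fin m → ℝ) (hx : ∀ n c, 0 ≤ x n c) :
    (∀ x' : N → Fin m → ℝ, (∀ n c, 0 ≤ x' n c) →
      (∀ c, ∑ n : N, x' n c = ∑ n : N, x n c) →
      ¬ ∃ i : N, ((∀ c, x i c ≤ x' i c) ∧ ∃ c, x i c < x' i c) ∧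
          ∀ k : N, ∀ c, x k c ≤ x' k c) ∧
    ¬ ∃ x' : N → Fin m → ℝ, (∀ n c, 0 ≤ x' n c) ∧
        (∀ c, ∑ n : N, x' n c = ∑ n : N, x n c) ∧
        ∃ i : N, ((∀ c, x i c ≤ x' i c) ∧ ∃ c, x i c < x' i c) ∧
          ∀ k : N, ∀ c, x k c ≤ x' k c := by
  have main : ∀ x' : N → Fin m → ℝ, (∀ n c, 0 ≤ x' n c) →
      (∀ c, ∑ n : N, x' n c = ∑ n : N, x n c) →
      ¬ ∃ i : N, ((∀ c, x i c ≤ x' i c) ∧ ∃ c, x i c < x' i c) ∧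
          ∀ k : N, ∀ c, x k c ≤ x' k c := by
    rintro x' _ hsum ⟨i, ⟨_, c, hlt⟩, hall⟩
    have : ∑ n : N, x n c < ∑ n : N, x' n c :=
      Finset.sum_lt_sum (fun k _ => hall k c) ⟨i, Finset.mem_univ i, hlt⟩
    exact absurd (hsum c) (ne_of_gt this)
  exact ⟨main, fun ⟨x', h1, h2, h3⟩ => main x' h1 h2 h3⟩
end

section
/- Under reference-point (relative-standing) preferences, no movement between strictly positive allocations is a Pareto improvement, and hence every strictly positive allocation is Pareto optimal: if f_k(x) = x_k / ((1/|N|)·∑_{n∈N} x_n), then for any allocations x, x' with x_n > 0 and x'_n > 0 for all n, it is impossible that f_k(x') ≥ f_k(x) for every k ∈ N with f_{k'}(x') > f_{k'}(x) for some k' ∈ N. -/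
/-- Under reference-point (relative-standing) preferences
`f k x = x k / ((1/|N|) · ∑ n, x n)`, no movement between strictly positive
allocations is a Pareto improvement, hence every strictly positive allocation
is Pareto optimal: it is impossible that every individual's relative standing
weakly improves while some individual's relative standing strictly
improves. -/
theorem no_pareto_improvement_relative_standing
    {N : Type*} [Fintype N] [Nonempty N]
    (x x' : N → ℝ)
    (hx : ∀ n, 0 < x n) (hx' : ∀ n, 0 < x' n) :
    ¬ ((∀ k : N,
          x k / ((1 / (Fintype.card N : ℝ)) * ∑ n : N, x n) ≤
          x' k / ((1 / (Fintype.card N : ℝ)) * ∑ n : N, x' n)) ∧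
       ∃ k' : N,
          x k' / ((1 / (Fintype.card N : ℝ)) * ∑ n : N, x n) <
          x' k' / ((1 / (Fintype.card N : ℝ)) * ∑ n : N, x' n)) := by
  rintro ⟨hall, k', hk'⟩
  have hc : (0 : ℝ) < (Fintype.card N : ℝ) := by
    exact_mod_cast Fintype.card_pos
  have hS : (0 : ℝ) < ∑ n : N, x n := Finset.sum_pos (fun n _ => hx n) Finset.univ_nonempty
  have hS' : (0 : ℝ) < ∑ n : N, x' n := Finset.sum_pos (fun n _ => hx' n) Finset.univ_nonempty
  have hsum : ∑ k : N, x k / ((1 / (Fintype.card N : ℝ)) * ∑ n : N, x n)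
      = (Fintype.card N : ℝ) := by
    rw [← Finset.sum_div]
    field_simp
  have hsum' : ∑ k : N, x' k / ((1 / (Fintype.card N : ℝ)) * ∑ n : N, x' n)
      = (Fintype.card N : ℝ) := by
    rw [← Finset.sum_div]
    field_simp
  have hlt : ∑ k : N, x k / ((1 / (Fintype.card N : ℝ)) * ∑ n : N, x n)
      < ∑ k : N, x' k / ((1 / (Fintype.card N : ℝ)) * ∑ n : N, x' n) :=
    Finset.sum_lt_sum (fun k _ => hall k) ⟨k', Finset.mem_univ k', hk'⟩
  rw [hsum, hsum'] at hlt
  exact lt_irrefl _ hlt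
end

section
/- Under reference-point (relative-standing) preferences, enriching one individual strictly worsens the assessment of everyone else: if f_k(x) = x_k / ((1/|N|)·∑_{n∈N} x_n), |N| ≥ 2, all allocations are strictly positive, and x → x' is a movement with x'_i > x_i for one individual i and x'_n = x_n for all n ≠ i, then f_k(x') < f_k(x) for every k ≠ i; in particular the movement x → x' is not a Pareto improvement. -/
/-- Under reference-point (relative-standing) preferences
`f k x = x k / ((1/|N|) · ∑ n, x n)` with at least two individuals and
strictly positive allocations, enriching one individual `i` (with everyone
else's allocation unchanged) strictly worsens the relative standing of every
`k ≠ i`; in particular the movement `x → x'` is not a Pareto improvement. -/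
theorem enrichment_worsens_everyone_else_relative_standing
    {N : Type*} [Fintype N] (hcard : 2 ≤ Fintype.card N)
    (x x' : N → ℝ)
    (hx : ∀ n, 0 < x n) (hx' : ∀ n, 0 < x' n)
    (i : N) (hi : x i < x' i)
    (hothers : ∀ n : N, n ≠ i → x' n = x n) :
    (∀ k : N, k ≠ i →
        x' k / ((1 / (Fintype.card N : ℝ)) * ∑ n : N, x' n) <
        x k / ((1 / (Fintype.card N : ℝ)) * ∑ n : N, x n)) ∧
    ¬ ((∀ k : N,
          x k / ((1 / (Fintype.card N : ℝ)) * ∑ n : N, x n) ≤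
          x' k / ((1 / (Fintype.card N : ℝ)) * ∑ n : N, x' n)) ∧
       ∃ k' : N,
          x k' / ((1 / (Fintype.card N : ℝ)) * ∑ n : N, x n) <
          x' k' / ((1 / (Fintype.card N : ℝ)) * ∑ n : N, x' n)) := by
  have hcpos : (0:ℝ) < (Fintype.card N : ℝ) := by positivity
  have hspos : 0 < ∑ n : N, x n := Finset.sum_pos (fun n _ => hx n) ⟨i, Finset.mem_univ i⟩
  have hsum : ∑ n : N, x n < ∑ n : N, x' n := by
    apply Finset.sum_lt_sum
    · intro n _
      by_cases h : n = i
      · subst h; exact hi.le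
      · rw [hothers n h]
    · exact ⟨i, Finset.mem_univ i, hi⟩
  have hmain : ∀ k : N, k ≠ i →
      x' k / ((1 / (Fintype.card N : ℝ)) * ∑ n : N, x' n) <
      x k / ((1 / (Fintype.card N : ℝ)) * ∑ n : N, x n) := by
    intro k hk
    rw [hothers k hk]
    apply div_lt_div_of_pos_left (hx k)
    · positivity
    · apply mul_lt_mul_of_pos_left hsum
      positivity
  refine ⟨hmain, ?_⟩
  rintro ⟨hall, -⟩
  obtain ⟨k, hk⟩ : ∃ k : N, k ≠ i := Fintype.exists_ne_of_one_lt_card hcard i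
  exact absurd (hall k) (not_le.mpr (hmain k hk))
end
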